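/- With K = ℝ(t₁,t₂), L = K(u) where ∂₁u = t₂u, ∂₂u = t₁u, and F = K(u³), every F-differential automorphism τ of L satisfies τ(u) = λu with λ³ = 1 and λ ∈ ℝ, hence λ = 1; therefore the group of F-differential automorphisms of L is trivial, even though F ≠ L. -/

import Mathlib

/-!
An automorphism `τ` of `L` fixing `K` and `u³` sends `u` to `λ u` with `λ³ = 1`. Since `ℝ` is
formally real, so are the polynomial rings and fraction fields built from it, in particular `L`,
and a formally real domain has no cube root of unity other than `1`. Hence `τ` fixes `K[u]` and
thus `L`.

On the other hand `K(u³)` lies in the image of the endomorphism of `L` induced by `u ↦ u³`, whose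
elements are quotients of polynomials in `u³`; comparing the coefficients of `u ^ (3m + 1)` in
`u · q(u³) = p(u³)` shows that `u` is not one of them.
-/

set_option maxHeartbeats 1000000
set_option synthInstance.maxHeartbeats 400000

/-- `K = ℝ(t₁,t₂)`. -/
abbrev RatField2 : Type := FractionRing (MvPolynomial (Fin 2) ℝ)

/-- `L = K(u)`, `u` transcendental over `K`. -/
abbrev ExtField : Type := FractionRing (Polynomial RatField2)

/-- The inclusion `K → L`. -/
noncomputable def incl : RatField2 →+* ExtField :=
  (algebraMap (Polynomial RatField2) ExtField).comp Polynomial.C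

/-- The element `u` of `L`. -/
noncomputable def uElt : ExtField :=
  algebraMap (Polynomial RatField2) ExtField Polynomial.X

/-- The variable `tⱼ` viewed in `L`. -/
noncomputable def tElt (j : Fin 2) : ExtField :=
  incl (algebraMap (MvPolynomial (Fin 2) ℝ) RatField2 (MvPolynomial.X j))

open Polynomial

theorem IsSumSq.exists_fin_sum {R : Type*} [AddCommMonoid R] [Mul R] {s : R} (hs : IsSumSq s) :
    ∃ (m : ℕ) (f : Fin m → R), s = ∑ i, f i * f i := by
  induction hs with
  | zero => exact ⟨0, Fin.elim0, by simp⟩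
  | sq_add a _ ih =>
    obtain ⟨m, f, rfl⟩ := ih
    exact ⟨m + 1, Fin.cons a f, by simp [Fin.sum_univ_succ]⟩

namespace IsFormallyReal

variable {R : Type*} [CommRing R]

theorem of_sum_mul_self_eq_zero
    (h : ∀ (m : ℕ) (f : Fin m → R), ∑ i, f i * f i = 0 → ∀ i, f i = 0) : IsFormallyReal R :=
  of_eq_zero_of_eq_zero_of_mul_self_add fun {_ a} hs hsum => by
    obtain ⟨m, f, rfl⟩ := hs.exists_fin_sum
    exact h (m + 1) (Fin.cons a f) (by simpa [Fin.sum_univ_succ] using hsum) 0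

theorem eq_zero_of_sum_mul_self_eq_zero [IsFormallyReal R] {ι : Type*} [Fintype ι]
    {f : ι → R} (h : ∑ i, f i * f i = 0) (i : ι) : f i = 0 := by
  classical
  rw [← Finset.add_sum_erase _ _ (Finset.mem_univ i)] at h
  have hi : f i * f i = 0 :=
    eq_zero_of_add_right (IsSumSq.mul_self _) (IsSumSq.sum_mul_self _ _) h
  exact IsReduced.eq_zero _ ⟨2, by rwa [sq]⟩

theorem of_injective {S : Type*} [CommRing S] [IsFormallyReal S] (f : R →+* S)
    (hf : Function.Injective f) : IsFormallyReal R :=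
  of_sum_mul_self_eq_zero fun _ g h i => hf <| by
    rw [map_zero]
    exact eq_zero_of_sum_mul_self_eq_zero (f := fun i => f (g i))
      (by simp_rw [← map_mul, ← map_sum, h, map_zero]) i

theorem eq_one_of_pow_three_eq_one [IsDomain R] [IsFormallyReal R] {x : R} (h : x ^ 3 = 1) :
    x = 1 := by
  -- `4 (x² + x + 1) = (2x + 1)² + 3` is a nonzero sum of squares.
  have hne : (2 * x + 1) * (2 * x + 1) + 3 ≠ 0 := fun h0 =>
    one_ne_zero <| eq_zero_of_add_right (s₂ := (2 * x + 1) * (2 * x + 1) + 2) IsSumSq.one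
      ((IsSumSq.mul_self _).add (IsSumSq.natCast 2)) (by linear_combination h0)
  have hfac : (x - 1) * ((2 * x + 1) * (2 * x + 1) + 3) = 0 := by linear_combination 4 * h
  exact sub_eq_zero.mp ((mul_eq_zero.mp hfac).resolve_right hne)

end IsFormallyReal

open IsFormallyReal

instance Polynomial.isFormallyReal {R : Type*} [CommRing R] [IsFormallyReal R] :
    IsFormallyReal R[X] := by
  refine of_sum_mul_self_eq_zero fun m f hsum => ?_
  -- If all `f i` have degree `< n + 1`, the coefficient of `X ^ (2 n)` in `∑ f i ^ 2` is
  -- `∑ (f i).coeff n ^ 2`, so all `(f i).coeff n` vanish and the degrees drop below `n`.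
  suffices ∀ n : ℕ, (∀ i, (f i).degree < n) → ∀ i, f i = 0 by
    refine this (Finset.univ.sup fun i => (f i).natDegree).succ fun i => ?_
    exact degree_lt_iff_coeff_zero _ _ |>.mpr fun k hk => coeff_eq_zero_of_natDegree_lt <|
      (Finset.le_sup (f := fun i => (f i).natDegree) (Finset.mem_univ i)).trans_lt hk
  intro n
  induction n with
  | zero => simp
  | succ n ih =>
    intro hdeg
    have hle : ∀ i, (f i).natDegree ≤ n := fun i =>
      natDegree_le_iff_degree_le.mpr (Order.le_of_lt_succ (by exact_mod_cast hdeg i))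
    have hcoeff : ∀ i, (f i).coeff n = 0 := eq_zero_of_sum_mul_self_eq_zero <| by
      simpa [finsetSum_coeff, coeff_mul_add_eq_of_natDegree_le (hle _) (hle _)] using
        congrArg (coeff · (n + n)) hsum
    refine ih fun i => (degree_lt_iff_coeff_zero _ _).mpr fun k hk => ?_
    rcases hk.eq_or_lt with rfl | hlt
    · exact hcoeff i
    · exact coeff_eq_zero_of_natDegree_lt ((hle i).trans_lt hlt)

theorem IsLocalization.isFormallyReal {R S : Type*} [CommRing R] [IsFormallyReal R] [CommRing S]
    [Algebra R S] (M : Submonoid R) [IsLocalization M S] (hM : M ≤ nonZeroDivisors R) :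
    IsFormallyReal S := by
  refine of_sum_mul_self_eq_zero fun m f hsum i => ?_
  obtain ⟨b, hb⟩ := IsLocalization.exist_integer_multiples_of_finite M f
  choose g hg using hb
  have hg0 : ∀ j, g j = 0 := eq_zero_of_sum_mul_self_eq_zero <|
    IsLocalization.injective S hM <| by
      simp only [map_sum, map_mul, hg, smul_mul_smul_comm, ← Finset.smul_sum, hsum, smul_zero,
        map_zero]
  have hbf : algebraMap R S b * f i = 0 := by rw [← Algebra.smul_def, ← hg, hg0, map_zero]
  exact (IsLocalization.map_units S b).mul_right_eq_zero.mp hbf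

instance FractionRing.isFormallyReal {R : Type*} [CommRing R] [IsFormallyReal R] :
    IsFormallyReal (FractionRing R) :=
  IsLocalization.isFormallyReal (nonZeroDivisors R) le_rfl

instance MvPolynomial.isFormallyReal_fin {R : Type*} [CommRing R] [IsFormallyReal R] :
    ∀ n : ℕ, IsFormallyReal (MvPolynomial (Fin n) R)
  | 0 =>
    let e := (MvPolynomial.isEmptyAlgEquiv R (Fin 0)).toRingEquiv
    of_injective e.toRingHom e.injective
  | n + 1 =>
    have := MvPolynomial.isFormallyReal_fin (R := R) n
    let e := (MvPolynomial.finSuccEquiv R n).toRingEquiv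
    of_injective e.toRingHom e.injective

theorem Polynomial.X_mul_expand_ne_expand {R : Type*} [CommSemiring R] {n : ℕ} (hn : 1 < n)
    (p : R[X]) {q : R[X]} (hq : q ≠ 0) : X * expand R n q ≠ expand R n p := by
  obtain ⟨m, hm⟩ : ∃ m, q.coeff m ≠ 0 := by
    by_contra! h
    exact hq (Polynomial.ext h)
  intro h
  have hcoeff := congrArg (coeff · (m * n + 1)) h
  have hndvd : ¬ n ∣ m * n + 1 := fun hd =>
    hn.ne' (Nat.dvd_one.mp ((Nat.dvd_add_right (dvd_mul_left n m)).mp hd))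
  simp only [coeff_X_mul, coeff_expand_mul (by omega : 0 < n), coeff_expand (by omega : 0 < n),
    if_neg hndvd] at hcoeff
  exact hm hcoeff

theorem Polynomial.X_notMem_closure_range_expand {R : Type*} [CommRing R] [IsDomain R] {n : ℕ}
    (hn : 1 < n) :
    algebraMap R[X] (FractionRing R[X]) X ∉
      Subfield.closure ((algebraMap R[X] (FractionRing R[X])).comp (expand R n).toRingHom).range := by
  have hinj : Function.Injective
      ((algebraMap R[X] (FractionRing R[X])).comp (expand R n).toRingHom) :=
    (IsFractionRing.injective R[X] (FractionRing R[X])).comp (expand_injective (by omega))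
  rw [← IsFractionRing.lift_fieldRange (K := FractionRing R[X]) hinj]
  rintro ⟨y, hy⟩
  obtain ⟨p, q, hq, rfl⟩ := IsFractionRing.div_surjective (A := R[X]) y
  have hq0 : algebraMap R[X] (FractionRing R[X]) (expand R n q) ≠ 0 :=
    (map_ne_zero_iff _ (IsFractionRing.injective R[X] (FractionRing R[X]))).mpr
      ((expand_ne_zero (by omega)).mpr (nonZeroDivisors.ne_zero hq))
  simp only [map_div₀, IsFractionRing.lift_algebraMap, RingHom.comp_apply, AlgHom.toRingHom_eq_coe,
    RingHom.coe_coe, div_eq_iff hq0, ← map_mul] at hy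
  exact X_mul_expand_ne_expand hn p (nonZeroDivisors.ne_zero hq)
    (IsFractionRing.injective R[X] (FractionRing R[X]) hy).symm

theorem differential_automorphisms_over_cube_trivial_general
    (D : Fin 2 → ExtField → ExtField) :
    (∀ τ : ExtField ≃+* ExtField,
      (∀ x : RatField2, τ (incl x) = incl x) →
      τ (uElt ^ 3) = uElt ^ 3 →
      (∀ (i : Fin 2) (x : ExtField), τ (D i x) = D i (τ x)) →
      τ = RingEquiv.refl ExtField) ∧
    uElt ∉ Subfield.closure (Set.range incl ∪ {uElt ^ 3}) := by
  refine ⟨fun τ hK hu3 _ => ?_, fun hu => X_notMem_closure_range_expand (R := RatField2)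
    (by norm_num : 1 < 3) (Subfield.closure_mono ?_ hu)⟩
  · have hu0 : uElt ≠ 0 := IsFractionRing.to_map_ne_zero_of_mem_nonZeroDivisors (K := ExtField)
      (mem_nonZeroDivisors_of_ne_zero X_ne_zero)
    have hτu : τ uElt = uElt := by
      have hcube : (τ uElt / uElt) ^ 3 = 1 := by
        rw [div_pow, ← map_pow, hu3, div_self (pow_ne_zero 3 hu0)]
      exact (div_eq_one_iff_eq hu0).mp (eq_one_of_pow_three_eq_one hcube)
    exact RingEquiv.toRingHom_injective <|
      IsLocalization.ringHom_ext (nonZeroDivisors RatField2[X]) (ringHom_ext hK hτu)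
  · rintro _ (⟨k, rfl⟩ | rfl)
    · exact ⟨C k, by simp [incl]⟩
    · exact ⟨X, by simp [uElt]⟩

/-- With `K = ℝ(t₁,t₂)`, `L = K(u)` where `∂₁u = t₂u`, `∂₂u = t₁u`, and `F = K(u³)`,
every `F`-differential automorphism of `L` is the identity, although `F ≠ L`. -/
theorem differential_automorphisms_over_cube_trivial
    (dK : Fin 2 → RatField2 → RatField2)
    (hKadd : ∀ i x y, dK i (x + y) = dK i x + dK i y)
    (hKmul : ∀ i x y, dK i (x * y) = x * dK i y + y * dK i x)
    (hKvar : ∀ i j : Fin 2,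
      dK i (algebraMap (MvPolynomial (Fin 2) ℝ) RatField2 (MvPolynomial.X j)) =
        if i = j then 1 else 0)
    (hKconst : ∀ (i : Fin 2) (r : ℝ),
      dK i (algebraMap (MvPolynomial (Fin 2) ℝ) RatField2 (MvPolynomial.C r)) = 0)
    (D : Fin 2 → ExtField → ExtField)
    (hadd : ∀ i x y, D i (x + y) = D i x + D i y)
    (hmul : ∀ i x y, D i (x * y) = x * D i y + y * D i x)
    (hext : ∀ (i : Fin 2) (x : RatField2), D i (incl x) = incl (dK i x))
    (hu0 : D 0 uElt = tElt 1 * uElt)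
    (hu1 : D 1 uElt = tElt 0 * uElt) :
    (∀ τ : ExtField ≃+* ExtField,
      (∀ x : RatField2, τ (incl x) = incl x) →
      τ (uElt ^ 3) = uElt ^ 3 →
      (∀ (i : Fin 2) (x : ExtField), τ (D i x) = D i (τ x)) →
      τ = RingEquiv.refl ExtField) ∧
    uElt ∉ Subfield.closure (Set.range incl ∪ {uElt ^ 3}) :=
  differential_automorphisms_over_cube_trivial_general D
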